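/- Consider the switched linear system X_{t+1} = A_{α_t} X_t + w_t in ℝ^d, where A_1, …, A_q are d×d real matrices, α : ℕ → {1,…,q} is a deterministic switching sequence, X_0 ∈ ℝ^d is a fixed initial state, and (w_t)_{t≥0} are i.i.d. random vectors whose common law has a density f with f(x) ≥ κ for x ∈ W and f(x) = 0 for x ∉ W, for some κ > 0 and a compact convex set W ⊆ ℝ^d with nonempty interior. Fix p ∈ {1,…,q} such that {t : α_t = p} is infinite, and fix a d×d matrix Â with Â ≠ A_p. Then, almost surely, there are infinitely many times t ≥ 1 with α_t = p and X_{t+1} − Â·X_t ∉ W. -/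

import Mathlib

/-!
Put `B = A p - Â`. At a time `t + 1` with `α (t + 1) = p` the residual `X (t + 2) - Â X (t + 1)`
equals `B (w t) + w (t + 1) + c`, where `c = B (A (α t) X t)` is determined by `w 0, …, w (t - 1)`.
Since `B ≠ 0`, some functional `ℓ` makes `ℓ ∘ B` non-constant on `W`. If `y` and `z` lie in the caps
of `W` where `ℓ ∘ B` and `ℓ` are nearly minimal, `ℓ (B y + z + c)` falls below the range of `ℓ` on
`W` unless `ℓ c` is large, and then the caps where both are nearly maximal push it above that range.
The caps have positive probability, so whatever the past, the residual leaves `W` with probability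
at least some `δ > 0`. Along times at least two apart these bounds multiply, so almost surely the
residual leaves `W` infinitely often.
-/

open MeasureTheory ProbabilityTheory Filter Topology
open scoped ENNReal

section ConvexBody

variable {E : Type*} [NormedAddCommGroup E] [NormedSpace ℝ E] {W : Set E}

lemma Convex.interior_inter_nonempty_of_mem (hWconv : Convex ℝ W)
    (hWint : (interior W).Nonempty) {U : Set E} (hU : IsOpen U) {x : E} (hxW : x ∈ W)
    (hxU : x ∈ U) : (interior W ∩ U).Nonempty := by
  have hx : x ∈ closure (interior W) := by
    rw [hWconv.closure_interior_eq_closure_of_nonempty_interior hWint]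
    exact subset_closure hxW
  simpa only [Set.inter_comm] using mem_closure_iff.mp hx U hU hxU

lemma ContinuousLinearMap.exists_lt_of_interior_nonempty {ℓ : StrongDual ℝ E} (hℓ : ℓ ≠ 0)
    (hWint : (interior W).Nonempty) : ∃ y ∈ W, ∃ z ∈ W, ℓ y < ℓ z := by
  obtain ⟨x, hx⟩ := hWint
  obtain ⟨v, hv⟩ : ∃ v, ℓ v ≠ 0 := by
    by_contra! h
    exact hℓ (ContinuousLinearMap.ext h)
  have hnear : ∀ᶠ t : ℝ in 𝓝[>] 0, x + t • v ∈ W := by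
    have hcont : Continuous fun t : ℝ => x + t • v := by fun_prop
    have : ∀ᶠ t : ℝ in 𝓝 0, x + t • v ∈ interior W :=
      hcont.continuousAt.eventually_mem (by simpa using isOpen_interior.mem_nhds hx)
    exact (this.filter_mono nhdsWithin_le_nhds).mono fun t ht => interior_subset ht
  obtain ⟨t, htW, ht⟩ := (hnear.and self_mem_nhdsWithin).exists
  have hne : ℓ x ≠ ℓ (x + t • v) := by
    simpa [map_add, map_smul] using (mul_ne_zero (ne_of_gt ht) hv).symm
  rcases hne.lt_or_gt with h | h
  · exact ⟨x, interior_subset hx, _, htW, h⟩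
  · exact ⟨_, htW, x, interior_subset hx, h⟩

lemma ContinuousLinearMap.exists_comp_ne_zero {B : E →L[ℝ] E} (hB : B ≠ 0) :
    ∃ ℓ : StrongDual ℝ E, ℓ.comp B ≠ 0 := by
  obtain ⟨v, hv⟩ : ∃ v, B v ≠ 0 := by
    by_contra! h
    exact hB (ContinuousLinearMap.ext h)
  obtain ⟨ℓ, hℓ⟩ := SeparatingDual.exists_ne_zero (R := ℝ) hv
  exact ⟨ℓ, fun h => hℓ (by simpa using DFunLike.congr_fun h v)⟩

lemma forall_lowCap_notMem_or_forall_highCap_notMem (B : E → E) (ℓ : StrongDual ℝ E)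
    {a b m M ε : ℝ} (hm : ∀ u ∈ W, m ≤ ℓ u) (hM : ∀ u ∈ W, ℓ u ≤ M) (hε : 4 * ε ≤ b - a)
    (c : E) :
    (∀ y z, ℓ (B y) < a + ε → ℓ z < m + ε → B y + z + c ∉ W) ∨
      (∀ y z, b - ε < ℓ (B y) → M - ε < ℓ z → B y + z + c ∉ W) := by
  by_contra! h
  obtain ⟨⟨y, z, hy, hz, hW⟩, ⟨y', z', hy', hz', hW'⟩⟩ := h
  have hlow := hm _ hW
  have hhigh := hM _ hW'
  simp only [map_add] at hlow hhigh
  linarith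

lemma prod_measure_le_one_sub_mul {α β : Type*} [MeasurableSpace α] [MeasurableSpace β]
    {μ : Measure α} {ν : Measure β} [IsProbabilityMeasure μ] [IsProbabilityMeasure ν]
    {S : Set (α × β)} {Y : Set α} {Z : Set β} (hY : MeasurableSet Y) (hZ : MeasurableSet Z)
    (hS : ∀ y ∈ Y, ∀ z ∈ Z, (y, z) ∉ S) : (μ.prod ν) S ≤ 1 - μ Y * ν Z := by
  rw [← Measure.prod_prod, ← prob_compl_eq_one_sub (hY.prod hZ)]
  exact measure_mono fun yz hyz hmem => hS _ hmem.1 _ hmem.2 hyz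

variable [MeasurableSpace E]

lemma Convex.measure_interior_inter_pos {μ : Measure E} (hWconv : Convex ℝ W)
    (hWint : (interior W).Nonempty) (hμ : ∀ U, IsOpen U → U ⊆ W → U.Nonempty → 0 < μ U)
    {U : Set E} (hU : IsOpen U) {x : E} (hxW : x ∈ W) (hxU : x ∈ U) :
    0 < μ (interior W ∩ U) :=
  hμ _ (isOpen_interior.inter hU) (Set.inter_subset_left.trans interior_subset)
    (hWconv.interior_inter_nonempty_of_mem hWint hU hxW hxU)

variable [OpensMeasurableSpace E]

theorem exists_pos_forall_prod_measure_le_one_sub {μ : Measure E} [IsProbabilityMeasure μ]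
    (hWc : IsCompact W) (hWconv : Convex ℝ W) (hWint : (interior W).Nonempty)
    (hμ : ∀ U, IsOpen U → U ⊆ W → U.Nonempty → 0 < μ U) {B : E →L[ℝ] E} (hB : B ≠ 0) :
    ∃ δ > 0, ∀ c : E, (μ.prod μ) {yz | B yz.1 + yz.2 + c ∈ W} ≤ 1 - δ := by
  obtain ⟨ℓ, hχ⟩ := B.exists_comp_ne_zero hB
  set χ : StrongDual ℝ E := ℓ.comp B
  have hWne : W.Nonempty := hWint.mono interior_subset
  obtain ⟨y₁, hy₁W, hy₁⟩ := hWc.exists_isMinOn hWne χ.continuous.continuousOn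
  obtain ⟨y₂, hy₂W, hy₂⟩ := hWc.exists_isMaxOn hWne χ.continuous.continuousOn
  obtain ⟨z₁, hz₁W, hz₁⟩ := hWc.exists_isMinOn hWne ℓ.continuous.continuousOn
  obtain ⟨z₂, hz₂W, hz₂⟩ := hWc.exists_isMaxOn hWne ℓ.continuous.continuousOn
  have hab : χ y₁ < χ y₂ := by
    obtain ⟨y, hy, z, hz, hyz⟩ := χ.exists_lt_of_interior_nonempty hχ hWint
    exact ((hy₁ hy).trans_lt hyz).trans_le (hy₂ hz)
  set ε := (χ y₂ - χ y₁) / 4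
  have hε : 0 < ε := by positivity
  set Y₁ := interior W ∩ χ ⁻¹' Set.Iio (χ y₁ + ε)
  set Z₁ := interior W ∩ ℓ ⁻¹' Set.Iio (ℓ z₁ + ε)
  set Y₂ := interior W ∩ χ ⁻¹' Set.Ioi (χ y₂ - ε)
  set Z₂ := interior W ∩ ℓ ⁻¹' Set.Ioi (ℓ z₂ - ε)
  have hY₁ : 0 < μ Y₁ := hWconv.measure_interior_inter_pos hWint hμ
    (isOpen_Iio.preimage χ.continuous) hy₁W (by simpa using hε)
  have hZ₁ : 0 < μ Z₁ := hWconv.measure_interior_inter_pos hWint hμ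
    (isOpen_Iio.preimage ℓ.continuous) hz₁W (by simpa using hε)
  have hY₂ : 0 < μ Y₂ := hWconv.measure_interior_inter_pos hWint hμ
    (isOpen_Ioi.preimage χ.continuous) hy₂W (by simpa using hε)
  have hZ₂ : 0 < μ Z₂ := hWconv.measure_interior_inter_pos hWint hμ
    (isOpen_Ioi.preimage ℓ.continuous) hz₂W (by simpa using hε)
  refine ⟨min (μ Y₁ * μ Z₁) (μ Y₂ * μ Z₂),
    lt_min (ENNReal.mul_pos hY₁.ne' hZ₁.ne') (ENNReal.mul_pos hY₂.ne' hZ₂.ne'), fun c => ?_⟩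
  have hmeas : ∀ {g : StrongDual ℝ E} {s : Set ℝ}, IsOpen s →
      MeasurableSet (interior W ∩ g ⁻¹' s) :=
    fun hs => (isOpen_interior.inter (hs.preimage (ContinuousLinearMap.continuous _))).measurableSet
  rcases forall_lowCap_notMem_or_forall_highCap_notMem B ℓ (a := χ y₁) (b := χ y₂) (ε := ε)
    (fun u hu => hz₁ hu) (fun u hu => hz₂ hu) (le_of_eq (by ring)) c with h | h
  · exact (prod_measure_le_one_sub_mul (Y := Y₁) (Z := Z₁) (hmeas isOpen_Iio) (hmeas isOpen_Iio)
      fun y hy z hz => h y z hy.2 hz.2).trans (tsub_le_tsub_left (min_le_left _ _) 1)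
  · exact (prod_measure_le_one_sub_mul (Y := Y₂) (Z := Z₂) (hmeas isOpen_Ioi) (hmeas isOpen_Ioi)
      fun y hy z hz => h y z hy.2 hz.2).trans (tsub_le_tsub_left (min_le_right _ _) 1)

end ConvexBody

theorem withDensity_ofReal_pos_of_isOpen {E : Type*} [TopologicalSpace E] [MeasurableSpace E]
    [OpensMeasurableSpace E] {ν : Measure E} [ν.IsOpenPosMeasure] {W : Set E} {f : E → ℝ}
    {κ : ℝ} (hκ : 0 < κ) (hfW : ∀ x ∈ W, κ ≤ f x) {U : Set E} (hU : IsOpen U) (hUW : U ⊆ W)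
    (hUne : U.Nonempty) : 0 < ν.withDensity (fun x => ENNReal.ofReal (f x)) U := by
  rw [withDensity_apply _ hU.measurableSet]
  calc 0 < ENNReal.ofReal κ * ν U :=
        ENNReal.mul_pos (ENNReal.ofReal_pos.mpr hκ).ne' (hU.measure_pos ν hUne).ne'
    _ = ∫⁻ _ in U, ENNReal.ofReal κ ∂ν := (setLIntegral_const U _).symm
    _ ≤ ∫⁻ x in U, ENNReal.ofReal (f x) ∂ν :=
        setLIntegral_mono' hU.measurableSet fun x hx => ENNReal.ofReal_le_ofReal (hfW x (hUW hx))

lemma Set.Infinite.preimage_add_one {S : Set ℕ} (hS : S.Infinite) : ((· + 1) ⁻¹' S).Infinite :=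
  ((hS.sdiff (Set.finite_singleton 0)).preimage fun t ht =>
    ⟨t - 1, Nat.sub_add_cancel (Nat.one_le_iff_ne_zero.mpr ht.2)⟩).mono fun _ hs => hs.1

section Independence

variable {Ω β γ : Type*} {m mΩ : MeasurableSpace Ω} [MeasurableSpace β] [MeasurableSpace γ]
  {P : Measure Ω}

theorem map_restrict_prodMk_eq_prod_of_indep [IsFiniteMeasure P] (hm : m ≤ mΩ)
    {Y : Ω → γ} (hY : Measurable Y) (hindep : Indep m (MeasurableSpace.comap Y ‹_›) P)
    {c : Ω → β} (hc : Measurable[m] c) {A : Set Ω} (hA : MeasurableSet[m] A) :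
    (P.restrict A).map (fun ω => (c ω, Y ω)) = ((P.restrict A).map c).prod (P.map Y) := by
  have hc' : Measurable c := hc.mono hm le_rfl
  refine (Measure.prod_eq fun s t hs ht => ?_).symm
  rw [Measure.map_apply (hc'.prodMk hY) (hs.prod ht), Measure.map_apply hc' hs,
    Measure.map_apply hY ht, Measure.restrict_apply (hc'.prodMk hY (hs.prod ht)),
    Measure.restrict_apply (hc' hs), Set.mk_preimage_prod, Set.inter_right_comm]
  exact (Indep_iff _ _ P).mp hindep _ _ ((hc hs).inter hA) ⟨t, ht, rfl⟩

theorem measure_inter_le_of_indep [IsFiniteMeasure P] (hm : m ≤ mΩ)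
    {Y : Ω → γ} (hY : Measurable Y) (hindep : Indep m (MeasurableSpace.comap Y ‹_›) P)
    {c : Ω → β} (hc : Measurable[m] c) {A : Set Ω} (hA : MeasurableSet[m] A)
    {G : Set (β × γ)} (hG : MeasurableSet G) {r : ℝ≥0∞}
    (hr : ∀ x, P.map Y (Prod.mk x ⁻¹' G) ≤ r) :
    P (A ∩ {ω | (c ω, Y ω) ∈ G}) ≤ r * P A := by
  have hcY : Measurable fun ω => (c ω, Y ω) := (hc.mono hm le_rfl).prodMk hY
  calc P (A ∩ {ω | (c ω, Y ω) ∈ G})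
      = ((P.restrict A).map c).prod (P.map Y) G := by
        rw [← map_restrict_prodMk_eq_prod_of_indep hm hY hindep hc hA, Measure.map_apply hcY hG,
          Measure.restrict_apply (hcY hG), Set.inter_comm]
        rfl
    _ = ∫⁻ x, P.map Y (Prod.mk x ⁻¹' G) ∂(P.restrict A).map c := Measure.prod_apply hG
    _ ≤ ∫⁻ _, r ∂(P.restrict A).map c := lintegral_mono hr
    _ = r * P A := by
        rw [lintegral_const, Measure.map_apply (hc.mono hm le_rfl) MeasurableSet.univ,
          Set.preimage_univ, Measure.restrict_apply_univ]

def noiseFiltration (w : ℕ → Ω → β) (hw : ∀ t, Measurable (w t)) : Filtration ℕ mΩ where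
  seq t := ⨆ i ∈ Set.Iio t, MeasurableSpace.comap (w i) inferInstance
  mono' _ _ hst := biSup_mono fun _ hi => Set.Iio_subset_Iio hst hi
  le' _ := iSup₂_le fun i _ => (hw i).comap_le

theorem measurable_noiseFiltration {w : ℕ → Ω → β} (hw : ∀ t, Measurable (w t)) {i t : ℕ}
    (hit : i < t) : Measurable[noiseFiltration w hw t] (w i) :=
  measurable_iff_comap_le.mpr (le_biSup (fun j => MeasurableSpace.comap (w j) _) hit)

theorem indep_noiseFiltration_iSup_Ici {w : ℕ → Ω → β} (hw : ∀ t, Measurable (w t))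
    (hindep : iIndepFun w P) (t : ℕ) :
    Indep (noiseFiltration w hw t) (⨆ i ∈ Set.Ici t, MeasurableSpace.comap (w i) ‹_›) P :=
  indep_iSup_of_disjoint (fun i => (hw i).comap_le) hindep.iIndep (Set.Iio_disjoint_Ici le_rfl)

theorem measure_biInter_range_le_of_measure_inter_le [IsFiniteMeasure P]
    (ℱ : Filtration ℕ mΩ) {T : Set ℕ} {E : ℕ → Set Ω}
    (hE : ∀ s, MeasurableSet[ℱ (s + 2)] (E s)) {δ : ℝ≥0∞}
    (hbound : ∀ s ∈ T, ∀ A, MeasurableSet[ℱ s] A → P (A ∩ E s) ≤ (1 - δ) * P A)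
    {τ : ℕ → ℕ} (hτT : ∀ k, τ k ∈ T) (hτ : ∀ k, τ k + 2 ≤ τ (k + 1)) (n : ℕ) :
    P (⋂ k ∈ Finset.range n, E (τ k)) ≤ (1 - δ) ^ n * P Set.univ := by
  induction n with
  | zero => simp
  | succ n ih =>
    have hτmono : StrictMono τ := strictMono_nat_of_lt_succ fun k => by linarith [hτ k]
    have hpast : MeasurableSet[ℱ (τ n)] (⋂ k ∈ Finset.range n, E (τ k)) :=
      .biInter (Finset.range n).countable_toSet fun k hk =>
        ℱ.mono ((hτ k).trans (hτmono.monotone (Finset.mem_range.mp hk))) _ (hE (τ k))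
    calc P (⋂ k ∈ Finset.range (n + 1), E (τ k))
        = P ((⋂ k ∈ Finset.range n, E (τ k)) ∩ E (τ n)) := by
          rw [Finset.range_add_one, Finset.set_biInter_insert, Set.inter_comm]
      _ ≤ (1 - δ) * P (⋂ k ∈ Finset.range n, E (τ k)) := hbound _ (hτT n) _ hpast
      _ ≤ (1 - δ) * ((1 - δ) ^ n * P Set.univ) := by gcongr
      _ = (1 - δ) ^ (n + 1) * P Set.univ := by ring

theorem ae_infinite_setOf_notMem_of_measure_inter_le [IsFiniteMeasure P]
    (ℱ : Filtration ℕ mΩ) {T : Set ℕ} (hT : T.Infinite) {E : ℕ → Set Ω}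
    (hE : ∀ s, MeasurableSet[ℱ (s + 2)] (E s)) {δ : ℝ≥0∞} (hδ : 0 < δ)
    (hbound : ∀ s ∈ T, ∀ A, MeasurableSet[ℱ s] A → P (A ∩ E s) ≤ (1 - δ) * P A) :
    ∀ᵐ ω ∂P, {s ∈ T | ω ∉ E s}.Infinite := by
  -- every other element of `T`, so that consecutive times are at least two apart
  set τ : ℕ → ℕ := fun k => Nat.nth (· ∈ T) (2 * k)
  have hnth : StrictMono (Nat.nth (· ∈ T)) := Nat.nth_strictMono hT
  have hτT : ∀ k, τ k ∈ T := fun k => Nat.nth_mem_of_infinite hT _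
  have hτ : ∀ k, τ k + 2 ≤ τ (k + 1) := fun k => by
    simpa [τ, add_comm, mul_add] using hnth.add_le_nat 2 (2 * k)
  have hτge : ∀ k, k ≤ τ k := fun k =>
    (Nat.le_mul_of_pos_left k two_pos).trans (hnth.id_le _)
  have hnull : ∀ j, P (⋂ k, E (τ (j + k))) = 0 := fun j => by
    have hdecay : Tendsto (fun n => (1 - δ) ^ n * P Set.univ) atTop (𝓝 0) := by
      simpa using ENNReal.Tendsto.mul_const (ENNReal.tendsto_pow_atTop_nhds_zero_of_lt_one
        (ENNReal.sub_lt_self ENNReal.one_ne_top one_ne_zero hδ.ne')) (.inr (measure_ne_top P _))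
    refine le_antisymm (ge_of_tendsto' hdecay fun n => ?_) bot_le
    refine (measure_mono ?_).trans (measure_biInter_range_le_of_measure_inter_le ℱ hE hbound
      (fun k => hτT (j + k)) (fun k => hτ (j + k)) n)
    exact Set.subset_iInter₂ fun k _ => Set.iInter_subset _ k
  have hae : ∀ᵐ ω ∂P, ∀ j, ∃ k, ω ∉ E (τ (j + k)) := by
    refine ae_all_iff.mpr fun j =>
      (measure_eq_zero_iff_ae_notMem.mp (hnull j)).mono fun ω hω => ?_
    simpa using hω
  filter_upwards [hae] with ω hω
  refine Set.infinite_of_forall_exists_gt fun a => ?_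
  obtain ⟨k, hk⟩ := hω (a + 1)
  exact ⟨τ (a + 1 + k), ⟨hτT _, hk⟩, by linarith [hτge (a + 1 + k)]⟩

end Independence

section SwitchedSystem

variable {Ω E : Type*} {mΩ : MeasurableSpace Ω} [MeasurableSpace E] {P : Measure Ω}
  {w : ℕ → Ω → E} (hw : ∀ t, Measurable (w t)) {F : ℕ → E → E} {X : ℕ → Ω → E} {x₀ : E}

theorem measurable_noiseFiltration_of_eq_add [Add E] [MeasurableAdd₂ E]
    (hF : ∀ t, Measurable (F t)) (hX0 : ∀ ω, X 0 ω = x₀)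
    (hX : ∀ t ω, X (t + 1) ω = F t (X t ω) + w t ω) :
    ∀ t, Measurable[noiseFiltration w hw t] (X t)
  | 0 => by simpa only [funext hX0] using measurable_const
  | t + 1 => by
    simp only [funext (hX t)]
    exact ((hF t).comp ((measurable_noiseFiltration_of_eq_add hF hX0 hX t).mono
      ((noiseFiltration w hw).mono t.le_succ) le_rfl)).add
      (measurable_noiseFiltration hw t.lt_succ_self)

variable [NormedAddCommGroup E] [NormedSpace ℝ E] [BorelSpace E]
  [SecondCountableTopology E] {W : Set E}

theorem measurableSet_setOf_add_mem (hF : ∀ t, Measurable (F t)) (hX0 : ∀ ω, X 0 ω = x₀)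
    (hX : ∀ t ω, X (t + 1) ω = F t (X t ω) + w t ω) (hW : MeasurableSet W) (B : E →L[ℝ] E)
    (s : ℕ) :
    MeasurableSet[noiseFiltration w hw (s + 2)] {ω | B (X (s + 1) ω) + w (s + 1) ω ∈ W} := by
  have hXs : Measurable[noiseFiltration w hw (s + 2)] (X (s + 1)) :=
    (measurable_noiseFiltration_of_eq_add hw hF hX0 hX (s + 1)).mono
      ((noiseFiltration w hw).mono (s + 1).le_succ) le_rfl
  exact (B.measurable.comp hXs).add (measurable_noiseFiltration hw (s + 1).lt_succ_self) hW

theorem measure_inter_setOf_add_mem_le [IsFiniteMeasure P] (hindep : iIndepFun w P)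
    {μ : Measure E} (hlaw : ∀ t, P.map (w t) = μ) (hF : ∀ t, Measurable (F t))
    (hX0 : ∀ ω, X 0 ω = x₀) (hX : ∀ t ω, X (t + 1) ω = F t (X t ω) + w t ω)
    (hW : MeasurableSet W) (B : E →L[ℝ] E) {r : ℝ≥0∞}
    (hr : ∀ c, (μ.prod μ) {yz | B yz.1 + yz.2 + c ∈ W} ≤ r) (s : ℕ) {A : Set Ω}
    (hA : MeasurableSet[noiseFiltration w hw s] A) :
    P (A ∩ {ω | B (X (s + 1) ω) + w (s + 1) ω ∈ W}) ≤ r * P A := by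
  set Y : Ω → E × E := fun ω => (w s ω, w (s + 1) ω)
  have hYindep : Indep (noiseFiltration w hw s) (MeasurableSpace.comap Y inferInstance) P := by
    refine indep_of_indep_of_le_right (indep_noiseFiltration_iSup_Ici hw hindep s) ?_
    refine (MeasurableSpace.comap_prodMk (w s) (w (s + 1))).le.trans (sup_le ?_ ?_)
    exacts [le_biSup (fun i => MeasurableSpace.comap (w i) _) (Set.mem_Ici.mpr le_rfl),
      le_biSup (fun i => MeasurableSpace.comap (w i) _) (Set.mem_Ici.mpr s.le_succ)]
  have hlawY : P.map Y = μ.prod μ := by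
    rw [(indepFun_iff_map_prod_eq_prod_map_map (hw s).aemeasurable
      (hw (s + 1)).aemeasurable).mp (hindep.indepFun s.succ_ne_self.symm), hlaw, hlaw]
  have hevent : {ω | B (X (s + 1) ω) + w (s + 1) ω ∈ W}
      = {ω | (B (F s (X s ω)), Y ω) ∈ {p : E × E × E | B p.2.1 + p.2.2 + p.1 ∈ W}} := by
    ext ω
    simp only [Set.mem_ofPred_eq, hX, map_add, Y]
    rw [add_comm (B (F s (X s ω))), add_right_comm]
  rw [hevent]
  refine measure_inter_le_of_indep ((noiseFiltration w hw).le s) ((hw s).prodMk (hw (s + 1)))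
    hYindep ((B.measurable.comp (hF s)).comp
      (measurable_noiseFiltration_of_eq_add hw hF hX0 hX s)) hA ?_ fun c => hlawY ▸ hr c
  exact (((B.measurable.comp (measurable_fst.comp measurable_snd)).add
    (measurable_snd.comp measurable_snd)).add measurable_fst) hW

end SwitchedSystem

theorem wrong_matrix_infeasible_infinitely_often_general
    {Ω : Type*} [MeasurableSpace Ω] (P : Measure Ω) [IsProbabilityMeasure P]
    (d q : ℕ)
    (W : Set (Fin d → ℝ))
    (hWc : IsCompact W) (hWconv : Convex ℝ W) (hWint : (interior W).Nonempty)
    (κ : ℝ) (hκ : 0 < κ)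
    (w : ℕ → Ω → Fin d → ℝ) (hw : ∀ t, Measurable (w t))
    (hindep : iIndepFun w P)
    (f : (Fin d → ℝ) → ℝ)
    (hlaw : ∀ t, P.map (w t) = volume.withDensity fun x => ENNReal.ofReal (f x))
    (hfW : ∀ x ∈ W, κ ≤ f x)
    (A : Fin q → Matrix (Fin d) (Fin d) ℝ) (α : ℕ → Fin q) (x₀ : Fin d → ℝ)
    (X : ℕ → Ω → Fin d → ℝ)
    (hX0 : ∀ ω, X 0 ω = x₀)
    (hXrec : ∀ t ω, X (t + 1) ω = (A (α t)).mulVec (X t ω) + w t ω)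
    (p : Fin q) (hp : {t : ℕ | α t = p}.Infinite)
    (Ahat : Matrix (Fin d) (Fin d) ℝ) (hAhat : Ahat ≠ A p) :
    ∀ᵐ ω ∂P,
      {t : ℕ | 1 ≤ t ∧ α t = p ∧
        X (t + 1) ω - Ahat.mulVec (X t ω) ∉ W}.Infinite := by
  have : IsProbabilityMeasure (volume.withDensity fun x => ENNReal.ofReal (f x)) :=
    hlaw 0 ▸ Measure.isProbabilityMeasure_map (hw 0).aemeasurable
  set B := LinearMap.toContinuousLinearMap (Matrix.toLin' (A p - Ahat))
  have hB : B ≠ 0 := by simpa [B, sub_eq_zero] using hAhat.symm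
  obtain ⟨δ, hδ, hfeas⟩ := exists_pos_forall_prod_measure_le_one_sub hWc hWconv hWint
    (fun _ hU hUW hUne => withDensity_ofReal_pos_of_isOpen (ν := volume) hκ hfW hU hUW hUne) hB
  have hF : ∀ t, Measurable fun x => (A (α t)).mulVec x := fun t =>
    (Matrix.toLin' (A (α t))).continuous_of_finiteDimensional.measurable
  have hW : MeasurableSet W := hWc.isClosed.measurableSet
  have hT : {s | α (s + 1) = p}.Infinite := hp.preimage_add_one
  filter_upwards [ae_infinite_setOf_notMem_of_measure_inter_le (noiseFiltration w hw) hT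
    (measurableSet_setOf_add_mem hw hF hX0 hXrec hW B) hδ fun s _ _ hA =>
      measure_inter_setOf_add_mem_le hw hindep hlaw hF hX0 hXrec hW B hfeas s hA] with ω hω
  refine (hω.image (add_left_injective 1).injOn).mono ?_
  rintro _ ⟨s, ⟨hsp, hsW⟩, rfl⟩
  refine ⟨le_add_self, hsp, fun h => hsW ?_⟩
  convert h using 1
  simp [B, hXrec (s + 1), hsp]
  abel

theorem wrong_matrix_infeasible_infinitely_often
    {Ω : Type*} [MeasurableSpace Ω] (P : Measure Ω) [IsProbabilityMeasure P]
    (d q : ℕ) (hd : 1 ≤ d) (hq : 1 ≤ q)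
    (W : Set (Fin d → ℝ))
    (hWc : IsCompact W) (hWconv : Convex ℝ W) (hWint : (interior W).Nonempty)
    (κ : ℝ) (hκ : 0 < κ)
    (w : ℕ → Ω → Fin d → ℝ) (hw : ∀ t, Measurable (w t))
    (hindep : iIndepFun w P)
    (f : (Fin d → ℝ) → ℝ)
    (hlaw : ∀ t, P.map (w t) = volume.withDensity fun x => ENNReal.ofReal (f x))
    (hfW : ∀ x ∈ W, κ ≤ f x) (hf0 : ∀ x ∉ W, f x = 0)
    (A : Fin q → Matrix (Fin d) (Fin d) ℝ) (α : ℕ → Fin q) (x₀ : Fin d → ℝ)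
    (X : ℕ → Ω → Fin d → ℝ)
    (hX0 : ∀ ω, X 0 ω = x₀)
    (hXrec : ∀ t ω, X (t + 1) ω = (A (α t)).mulVec (X t ω) + w t ω)
    (p : Fin q) (hp : {t : ℕ | α t = p}.Infinite)
    (Ahat : Matrix (Fin d) (Fin d) ℝ) (hAhat : Ahat ≠ A p) :
    ∀ᵐ ω ∂P,
      {t : ℕ | 1 ≤ t ∧ α t = p ∧
        X (t + 1) ω - Ahat.mulVec (X t ω) ∉ W}.Infinite :=
  wrong_matrix_infeasible_infinitely_often_general P d q W hWc hWconv hWint κ hκ w hw hindep f hlaw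
    hfW A α x₀ X hX0 hXrec p hp Ahat hAhat
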